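/- Assume SC: every pointwise continuous function F : ℕ^ℕ → ℕ is strongly continuous. Then sc-FAN holds: for every c-bar P ⊆ ℕ* and every fan T, there exists M ∈ ℕ such that P(ᾱM) for every path α in T. -/

import Mathlib

/-- Initial segment of `α` of length `n`. -/
def seg (α : ℕ → ℕ) (n : ℕ) : List ℕ := List.ofFn (fun i : Fin n => α i)

/-- `a` followed by the constant zero sequence. -/
def zext (a : List ℕ) : ℕ → ℕ := fun i => a.getD i 0

/-- Upward closure under extension. -/
def extU (U : Set (List ℕ)) : Set (List ℕ) := {a | ∃ b ∈ U, b <+: a}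

/-- The cover of formal Baire space, generated by η, ζ, ϝ. -/
inductive Cover : List ℕ → Set (List ℕ) → Prop
  | eta {a : List ℕ} {U : Set (List ℕ)} : a ∈ U → Cover a U
  | zeta {a : List ℕ} {U : Set (List ℕ)} (k : ℕ) : Cover a U → Cover (a ++ [k]) U
  | digamma {a : List ℕ} {U : Set (List ℕ)} : (∀ n, Cover (a ++ [n]) U) → Cover a U

/-- A spread: a decidable tree where every node has a child. -/
def IsSpread (T : Set (List ℕ)) : Prop :=
  (∀ a, a ∈ T ∨ a ∉ T) ∧ (∀ a b : List ℕ, a <+: b → b ∈ T → a ∈ T) ∧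
  (∀ a ∈ T, ∃ n, a ++ [n] ∈ T)

/-- A fan: a finitely branching spread. -/
def IsFan (T : Set (List ℕ)) : Prop :=
  IsSpread T ∧ ∀ a ∈ T, ∃ N, ∀ n, a ++ [n] ∈ T → n ≤ N

/-- `α` is a path in the tree `T`. -/
def IsPath (T : Set (List ℕ)) (α : ℕ → ℕ) : Prop := ∀ n, seg α n ∈ T

/-- A c-bar: a c-set barring every sequence. -/
def IsCBar (P : Set (List ℕ)) : Prop :=
  (∃ δ : List ℕ → ℕ, ∀ a, a ∈ P ↔ ∀ b, δ a = δ (a ++ b)) ∧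
  (∀ α : ℕ → ℕ, ∃ n, seg α n ∈ P)

/-- Pointwise continuity for `F : ℕ^ℕ → ℕ`. -/
def PtwiseCts (F : (ℕ → ℕ) → ℕ) : Prop :=
  ∀ α : ℕ → ℕ, ∃ n, ∀ β : ℕ → ℕ, seg β n = seg α n → F β = F α

/-- An inductive subset of ℕ*. -/
def Inductive (Q : Set (List ℕ)) : Prop := ∀ a, (∀ n, a ++ [n] ∈ Q) → a ∈ Q

/-- Preimage of a subset of ℕ under a relation r ⊆ ℕ* × ℕ. -/
def rInv (r : List ℕ → ℕ → Prop) (D : Set ℕ) : Set (List ℕ) := {a | ∃ n ∈ D, r a n}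

/-- Formal topology map from formal Baire space to formal natural numbers. -/
def IsFTopMap (r : List ℕ → ℕ → Prop) : Prop :=
  Cover [] (rInv r Set.univ) ∧
  ∀ n m : ℕ, ∀ a ∈ extU (rInv r {n}) ∩ extU (rInv r {m}),
    Cover a (rInv r {l | l = n ∧ n = m})

/-- `F` is formally continuous: induced by a formal topology map on points. -/
def FormallyCts (F : (ℕ → ℕ) → ℕ) : Prop :=
  ∃ r : List ℕ → ℕ → Prop, IsFTopMap r ∧
    ∀ α : ℕ → ℕ, {n | ∃ k, r (seg α k) n} = {F α}

/-- The class of Brouwer-operations. -/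
inductive IsBrouwerOp : (List ℕ → ℕ) → Prop
  | const (n : ℕ) : IsBrouwerOp (fun _ => n + 1)
  | sup {γ : List ℕ → ℕ} : γ [] = 0 →
      (∀ n, IsBrouwerOp (fun a => γ (n :: a))) → IsBrouwerOp γ

/-- `bar γ`: minimal sequences on which `γ` is positive. -/
def barOf (γ : List ℕ → ℕ) : Set (List ℕ) :=
  {a | 0 < γ a ∧ ∀ b : List ℕ, b <+: a → b ≠ a → γ b = 0}

/-- The set presentation `Cov` of formal Baire space. -/
inductive Cov : List ℕ → Set (List ℕ) → Prop
  | single (a : List ℕ) : Cov a {a}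
  | union {a : List ℕ} {U : ℕ → Set (List ℕ)} :
      (∀ n, Cov (a ++ [n]) (U n)) → Cov a (⋃ n, U n)

/-!
Let `δ` witness that `P` is a c-set. Along any `α`, `δ (seg α n)` is constant from the first `n`
with `seg α n ∈ P` on, so the last position `F α` at which it changes is determined by a segment
in `P`, and `F` is pointwise continuous. By SC it is uniformly continuous on the fan `T` with some
modulus `N`, hence bounded on `T` by some `B`, as level `N` of a fan is finite. Then
`M = max N (B + 1)` works: if `seg α M ∉ P`, some extension `β` of `seg α M` makes `δ` jump at a
position `≥ M`, while `F β = F α ≤ B < M` because `β` agrees with `α` up to `N`.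
-/

@[simp]
lemma seg_length (α : ℕ → ℕ) (n : ℕ) : (seg α n).length = n := by simp [seg]

lemma seg_take (α : ℕ → ℕ) {m n : ℕ} (h : m ≤ n) : (seg α n).take m = seg α m := by
  apply List.ext_getElem
  · simp [seg, h]
  · intro i _ _
    simp [seg]

lemma seg_prefix (α : ℕ → ℕ) {m n : ℕ} (h : m ≤ n) : seg α m <+: seg α n := by
  rw [← seg_take α h]
  exact List.take_prefix _ _

lemma seg_eq_seg_of_le {α β : ℕ → ℕ} {m n : ℕ} (h : seg α n = seg β n) (hmn : m ≤ n) :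
    seg α m = seg β m := by
  rw [← seg_take α hmn, ← seg_take β hmn, h]

lemma seg_zext (a : List ℕ) {n : ℕ} (h : n ≤ a.length) : seg (zext a) n = a.take n := by
  apply List.ext_getElem
  · simp [h]
  · intro i h1 _
    have hi : i < a.length := lt_of_lt_of_le (by simpa using h1) h
    simp [seg, zext, List.getD_eq_getElem?_getD, List.getElem?_eq_getElem hi]

lemma seg_zext_length (a : List ℕ) : seg (zext a) a.length = a := by
  rw [seg_zext a le_rfl, List.take_length]

lemma exists_ne_succ_of_ne {γ : Type*} (f : ℕ → γ) {m n : ℕ} (hmn : m ≤ n) (h : f m ≠ f n) :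
    ∃ k, m ≤ k ∧ k < n ∧ f k ≠ f (k + 1) := by
  induction n, hmn using Nat.le_induction with
  | base => exact absurd rfl h
  | succ n hmn ih =>
    by_cases hn : f n = f (n + 1)
    · obtain ⟨k, hmk, hkn, hk⟩ := ih (fun he => h (he.trans hn))
      exact ⟨k, hmk, by omega, hk⟩
    · exact ⟨n, hmn, by omega, hn⟩

lemma IsFan.finite_level {T : Set (List ℕ)} (hT : IsFan T) (n : ℕ) :
    {a | a ∈ T ∧ a.length = n}.Finite := by
  have hbranch : ∀ a, ∃ N, ∀ k, a ++ [k] ∈ T → k ≤ N := by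
    intro a
    by_cases h : a ∈ T
    · exact hT.2 a h
    · exact ⟨0, fun k hk => absurd (hT.1.2.1 a (a ++ [k]) ⟨[k], rfl⟩ hk) h⟩
  choose N hN using hbranch
  induction n with
  | zero =>
    refine (Set.finite_singleton ([] : List ℕ)).subset ?_
    rintro a ⟨-, ha⟩
    simpa using ha
  | succ n ih =>
    refine (ih.biUnion fun a _ => (Set.finite_Iic (N a)).image fun k => a ++ [k]).subset ?_
    rintro b ⟨hbT, hbl⟩
    have hne : b ≠ [] := by rintro rfl; simp at hbl
    have hb : b.dropLast ++ [b.getLast hne] = b := List.dropLast_append_getLast hne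
    have hdT : b.dropLast ∈ T := hT.1.2.1 _ b ⟨_, hb⟩ hbT
    refine Set.mem_biUnion (x := b.dropLast) ⟨hdT, by simp [hbl]⟩ ?_
    exact ⟨b.getLast hne, hN _ _ (by rwa [hb]), hb⟩

lemma IsFan.exists_bound {T : Set (List ℕ)} (hT : IsFan T) {F : (ℕ → ℕ) → ℕ} {N : ℕ}
    (hN : ∀ α, IsPath T α → ∀ β, seg α N = seg β N → F α = F β) :
    ∃ B, ∀ α, IsPath T α → F α ≤ B := by
  obtain ⟨B, hB⟩ := ((hT.finite_level N).image fun a => F (zext a)).bddAbove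
  refine ⟨B, fun α hα => ?_⟩
  have hseg : seg α N = seg (zext (seg α N)) N := by
    simpa using (seg_zext_length (seg α N)).symm
  rw [hN α hα _ hseg]
  exact hB ⟨seg α N, ⟨hα N, seg_length α N⟩, rfl⟩

def jumps (δ : List ℕ → ℕ) (α : ℕ → ℕ) : Set ℕ := {n | δ (seg α n) ≠ δ (seg α (n + 1))}

/-- The function `F` of the paper, there `max (jumps δ α ∪ {1})`; here `sSup ∅ = 0` serves
equally well. -/
noncomputable def lastJump (δ : List ℕ → ℕ) (α : ℕ → ℕ) : ℕ := sSup (jumps δ α)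

section CSet

variable {P : Set (List ℕ)} {δ : List ℕ → ℕ} (hδ : ∀ a, a ∈ P ↔ ∀ b, δ a = δ (a ++ b))
include hδ

lemma delta_seg_eq_of_seg_mem {α : ℕ → ℕ} {n k : ℕ} (hn : seg α n ∈ P) (hk : n ≤ k) :
    δ (seg α k) = δ (seg α n) := by
  obtain ⟨t, ht⟩ := seg_prefix α hk
  rw [← ht, ← (hδ _).1 hn t]

lemma jumps_subset_Iio {α : ℕ → ℕ} {n : ℕ} (hn : seg α n ∈ P) : jumps δ α ⊆ Set.Iio n := by
  intro k hk
  refine Set.mem_Iio.2 (lt_of_not_ge fun hkn => hk ?_)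
  exact ((delta_seg_eq_of_seg_mem hδ hn hkn).trans
    (delta_seg_eq_of_seg_mem hδ hn (by omega)).symm)

lemma jumps_eq_of_seg_eq {α β : ℕ → ℕ} {n : ℕ} (hn : seg α n ∈ P) (h : seg β n = seg α n) :
    jumps δ β = jumps δ α := by
  ext k
  rcases lt_or_ge k n with hk | hk
  · simp only [jumps, Set.mem_ofPred_eq, seg_eq_seg_of_le h hk.le, seg_eq_seg_of_le h hk]
  · have hβn : seg β n ∈ P := h ▸ hn
    exact iff_of_false (fun hk' => (jumps_subset_Iio hδ hβn hk').not_ge hk)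
      (fun hk' => (jumps_subset_Iio hδ hn hk').not_ge hk)

variable (hbar : ∀ α : ℕ → ℕ, ∃ n, seg α n ∈ P)
include hbar

lemma le_lastJump {α : ℕ → ℕ} {k : ℕ} (hk : k ∈ jumps δ α) : k ≤ lastJump δ α := by
  obtain ⟨n, hn⟩ := hbar α
  exact le_csSup (bddAbove_Iio.mono (jumps_subset_Iio hδ hn)) hk

lemma ptwiseCts_lastJump : PtwiseCts (lastJump δ) := by
  intro α
  obtain ⟨n, hn⟩ := hbar α
  exact ⟨n, fun β h => congrArg sSup (jumps_eq_of_seg_eq hδ hn h)⟩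

lemma seg_mem_of_lastJump_lt {α : ℕ → ℕ} {K : ℕ}
    (hloc : ∀ β, seg β K = seg α K → lastJump δ β = lastJump δ α)
    (hlt : lastJump δ α < K) : seg α K ∈ P := by
  by_contra hnP
  obtain ⟨c, hc⟩ : ∃ c, δ (seg α K) ≠ δ (seg α K ++ c) := by
    simpa [hδ] using hnP
  set β := zext (seg α K ++ c)
  have hβK : seg β K = seg α K := by
    rw [seg_zext _ (by simp), List.take_left' (seg_length α K)]
  have hβKc : seg β (K + c.length) = seg α K ++ c := by
    simpa using seg_zext_length (seg α K ++ c)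
  obtain ⟨k, hKk, -, hk⟩ := exists_ne_succ_of_ne (fun k => δ (seg β k)) (Nat.le_add_right K c.length)
    (by simpa only [hβK, hβKc] using hc)
  have := le_lastJump hδ hbar hk
  rw [hloc β hβK] at this
  omega

end CSet

theorem SC_implies_scFAN
    (hSC : ∀ F : (ℕ → ℕ) → ℕ, PtwiseCts F →
      ∀ T : Set (List ℕ), IsFan T → ∃ N, ∀ α : ℕ → ℕ, IsPath T α →
        ∀ β : ℕ → ℕ, seg α N = seg β N → F α = F β) :
    ∀ P : Set (List ℕ), IsCBar P → ∀ T : Set (List ℕ), IsFan T →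
      ∃ M, ∀ α : ℕ → ℕ, IsPath T α → seg α M ∈ P := by
  rintro P ⟨⟨δ, hδ⟩, hbar⟩ T hT
  obtain ⟨N, hN⟩ := hSC (lastJump δ) (ptwiseCts_lastJump hδ hbar) T hT
  obtain ⟨B, hB⟩ := hT.exists_bound hN
  refine ⟨max N (B + 1), fun α hα => seg_mem_of_lastJump_lt hδ hbar (fun β hβ => ?_) ?_⟩
  · exact (hN α hα β (seg_eq_seg_of_le hβ (le_max_left _ _)).symm).symm
  · exact (hB α hα).trans_lt (Nat.lt_of_succ_le (le_max_right _ _))
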